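/- arXiv:1610.08887 — 13 statements merged into one kernel-verified Lean document; each statement's English description precedes it below -/
import Mathlib

section
/- The dual cone of the extended second order cone L equals M, i.e., M = {(y,v) : ⟨x,y⟩ + ⟨u,v⟩ ≥ 0 for all (x,u) ∈ L}. -/
/-! Both inclusions reduce to Cauchy–Schwarz. If `y ≥ 0` and `‖v‖ ≤ ∑ yᵢ`, then for `x ≥ ‖u‖ e`
we get `⟪x, y⟫ ≥ ‖u‖ ∑ yᵢ ≥ ‖u‖ ‖v‖ ≥ -⟪u, v⟫`. Conversely, testing a dual vector `(y, v)`
against `(eᵢ, 0) ∈ L` gives `yᵢ ≥ 0`, and against `(‖v‖ e, -v) ∈ L` gives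
`‖v‖ ∑ yᵢ ≥ ‖v‖²`. -/

open RealInnerProductSpace

section

variable {ι E : Type*} [Fintype ι] [NormedAddCommGroup E] [InnerProductSpace ℝ E]

lemma EuclideanSpace.real_inner_eq_sum_mul (x y : EuclideanSpace ℝ ι) :
    ⟪x, y⟫ = ∑ i, x i * y i := by
  simp [PiLp.inner_apply, mul_comm]

lemma EuclideanSpace.mul_sum_le_real_inner {c : ℝ} {x y : EuclideanSpace ℝ ι}
    (hx : ∀ i, c ≤ x i) (hy : ∀ i, 0 ≤ y i) : c * ∑ i, y i ≤ ⟪x, y⟫ := by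
  rw [EuclideanSpace.real_inner_eq_sum_mul, Finset.mul_sum]
  exact Finset.sum_le_sum fun i _ => mul_le_mul_of_nonneg_right (hx i) (hy i)

lemma inner_add_inner_nonneg_of_norm_le {x y : EuclideanSpace ℝ ι} {u v : E}
    (hxu : ∀ i, ‖u‖ ≤ x i) (hv : ‖v‖ ≤ ∑ i, y i) (hy : ∀ i, 0 ≤ y i) :
    0 ≤ ⟪x, y⟫ + ⟪u, v⟫ := by
  have : -⟪u, v⟫ ≤ ⟪x, y⟫ :=
    calc -⟪u, v⟫ ≤ ‖u‖ * ‖v‖ := (neg_le_abs _).trans (abs_real_inner_le_norm u v)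
      _ ≤ ‖u‖ * ∑ i, y i := mul_le_mul_of_nonneg_left hv (norm_nonneg u)
      _ ≤ ⟪x, y⟫ := EuclideanSpace.mul_sum_le_real_inner hxu hy
  linarith

variable {y : EuclideanSpace ℝ ι} {v : E}
  (h : ∀ (x : EuclideanSpace ℝ ι) (u : E), (∀ i, ‖u‖ ≤ x i) → 0 ≤ ⟪x, y⟫ + ⟪u, v⟫)
include h

lemma nonneg_apply_of_forall_inner_add_inner_nonneg (i : ι) : 0 ≤ y i := by
  classical
  have hmem : ∀ j, ‖(0 : E)‖ ≤ EuclideanSpace.single i (1 : ℝ) j := by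
    intro j
    by_cases hj : j = i <;> simp [hj]
  simpa [EuclideanSpace.inner_single_left] using h _ 0 hmem

lemma norm_le_sum_of_forall_inner_add_inner_nonneg : ‖v‖ ≤ ∑ i, y i := by
  have hsum : 0 ≤ ∑ i, y i :=
    Finset.sum_nonneg fun i _ => nonneg_apply_of_forall_inner_add_inner_nonneg h i
  have key := h (WithLp.toLp 2 fun _ => ‖v‖) (-v) fun _ => by simp
  rw [EuclideanSpace.real_inner_eq_sum_mul, inner_neg_left,
    real_inner_self_eq_norm_mul_norm] at key
  simp only [← Finset.mul_sum] at key
  nlinarith [norm_nonneg v]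

end

theorem dual_of_extended_second_order_cone_general
    (p q : ℕ)
    (L M : Set (EuclideanSpace ℝ (Fin p) × EuclideanSpace ℝ (Fin q)))
    (hL : L = {xu | ∀ i : Fin p, ‖xu.2‖ ≤ xu.1 i})
    (hM : M = {yv | ‖yv.2‖ ≤ ∑ i : Fin p, yv.1 i ∧ ∀ i : Fin p, 0 ≤ yv.1 i}) :
    M = {yv | ∀ xu ∈ L, 0 ≤ ⟪xu.1, yv.1⟫ + ⟪xu.2, yv.2⟫} := by
  subst hL hM
  ext ⟨y, v⟩
  constructor
  · rintro ⟨hv, hy⟩ ⟨x, u⟩ hxu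
    exact inner_add_inner_nonneg_of_norm_le hxu hv hy
  · intro h
    have h' := fun x u hxu => h (x, u) hxu
    exact ⟨norm_le_sum_of_forall_inner_add_inner_nonneg h',
      nonneg_apply_of_forall_inner_add_inner_nonneg h'⟩

theorem dual_of_extended_second_order_cone
    (p q : ℕ) (hp : 0 < p) (hq : 0 < q)
    (L M : Set (EuclideanSpace ℝ (Fin p) × EuclideanSpace ℝ (Fin q)))
    (hL : L = {xu | ∀ i : Fin p, ‖xu.2‖ ≤ xu.1 i})
    (hM : M = {yv | ‖yv.2‖ ≤ ∑ i : Fin p, yv.1 i ∧ ∀ i : Fin p, 0 ≤ yv.1 i}) :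
    M = {yv | ∀ xu ∈ L, 0 ≤ ⟪xu.1, yv.1⟫ + ⟪xu.2, yv.2⟫} :=
  dual_of_extended_second_order_cone_general p q L M hL hM
end

section
/- The extended second order cone L is subdual: L ⊆ M, where M is the dual cone of L. -/
open RealInnerProductSpace

theorem extended_second_order_cone_subdual
    (p q : ℕ) (hp : 0 < p) (hq : 0 < q)
    (L M : Set (EuclideanSpace ℝ (Fin p) × EuclideanSpace ℝ (Fin q)))
    (hL : L = {xu | ∀ i : Fin p, ‖xu.2‖ ≤ xu.1 i})
    (hM : M = {yv | ‖yv.2‖ ≤ ∑ i : Fin p, yv.1 i ∧ ∀ i : Fin p, 0 ≤ yv.1 i}) :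
    L ⊆ M := by
  subst hL hM
  rintro ⟨x, u⟩ h
  have hnn : ∀ i, 0 ≤ x i := fun i => le_trans (norm_nonneg u) (h i)
  refine ⟨?_, hnn⟩
  have i0 : Fin p := ⟨0, hp⟩
  calc ‖u‖ ≤ x i0 := h i0
    _ ≤ ∑ i, x i := Finset.single_le_sum (fun i _ => hnn i) (Finset.mem_univ i0)
end

section
/- If x,y ∈ ℝ^p, u,v ∈ ℝ^q with u ≠ 0 and v ≠ 0, and there exists λ > 0 such that v = −λu, ⟨y,e⟩ = ‖v‖, x − ‖u‖e ≥ 0, y ≥ 0, and ⟨x − ‖u‖e, y⟩ = 0, then (x,u) ∈ L, (y,v) ∈ M and ⟨(x,u),(y,v)⟩ = 0. -/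
open RealInnerProductSpace

theorem complementarity_sufficient
    (p q : ℕ) (hp : 0 < p) (hq : 0 < q)
    (L M : Set (EuclideanSpace ℝ (Fin p) × EuclideanSpace ℝ (Fin q)))
    (hL : L = {xu | ∀ i : Fin p, ‖xu.2‖ ≤ xu.1 i})
    (hM : M = {yv | ‖yv.2‖ ≤ ∑ i : Fin p, yv.1 i ∧ ∀ i : Fin p, 0 ≤ yv.1 i})
    (x y : EuclideanSpace ℝ (Fin p)) (u v : EuclideanSpace ℝ (Fin q))
    (hu : u ≠ 0) (hv : v ≠ 0)
    (lam : ℝ) (hlam : 0 < lam) (hvu : v = -lam • u)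
    (hye : ∑ i : Fin p, y i = ‖v‖)
    (hx : ∀ i : Fin p, 0 ≤ x i - ‖u‖)
    (hy : ∀ i : Fin p, 0 ≤ y i)
    (hperp : ∑ i : Fin p, (x i - ‖u‖) * y i = 0) :
    (x, u) ∈ L ∧ (y, v) ∈ M ∧ ⟪x, y⟫ + ⟪u, v⟫ = 0 := by
  have hnv : ‖v‖ = lam * ‖u‖ := by
    rw [hvu, norm_smul, Real.norm_eq_abs, abs_neg, abs_of_pos hlam]
  refine ⟨?_, ?_, ?_⟩
  · rw [hL]
    intro i
    have := hx i; simp only []; linarith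
  · rw [hM]
    exact ⟨le_of_eq hye.symm, hy⟩
  · have h1 : ⟪x, y⟫ = ∑ i : Fin p, x i * y i := by
      simp [PiLp.inner_apply, RCLike.inner_apply, mul_comm]
    have h2 : ⟪u, v⟫ = -lam * ‖u‖ ^ 2 := by
      rw [hvu, inner_smul_right, real_inner_self_eq_norm_sq]
    have h3 : ∑ i : Fin p, x i * y i = ‖u‖ * ∑ i : Fin p, y i := by
      have : ∑ i : Fin p, (x i - ‖u‖) * y i
          = ∑ i : Fin p, x i * y i - ‖u‖ * ∑ i : Fin p, y i := by
        rw [Finset.mul_sum, ← Finset.sum_sub_distrib]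
        congr 1; ext i; ring
      linarith [this ▸ hperp]
    rw [h1, h2, h3, hye, hnv]; ring
end

section
/- If x,y ∈ ℝ^p, u,v ∈ ℝ^q \ {0}, (x,u) ∈ L, (y,v) ∈ M and ⟨(x,u),(y,v)⟩ = 0, then there exists λ > 0 such that v = −λu, ⟨y,e⟩ = ‖v‖, x − ‖u‖e ≥ 0, y ≥ 0, and ⟨x − ‖u‖e, y⟩ = 0. -/
open RealInnerProductSpace

theorem complementarity_necessary
    (p q : ℕ) (hp : 0 < p) (hq : 0 < q)
    (L M : Set (EuclideanSpace ℝ (Fin p) × EuclideanSpace ℝ (Fin q)))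
    (hL : L = {xu | ∀ i : Fin p, ‖xu.2‖ ≤ xu.1 i})
    (hM : M = {yv | ‖yv.2‖ ≤ ∑ i : Fin p, yv.1 i ∧ ∀ i : Fin p, 0 ≤ yv.1 i})
    (x y : EuclideanSpace ℝ (Fin p)) (u v : EuclideanSpace ℝ (Fin q))
    (hu : u ≠ 0) (hv : v ≠ 0)
    (hxu : (x, u) ∈ L) (hyv : (y, v) ∈ M)
    (hperp : ⟪x, y⟫ + ⟪u, v⟫ = 0) :
    ∃ lam : ℝ, 0 < lam ∧ v = -lam • u ∧ ∑ i : Fin p, y i = ‖v‖ ∧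
      (∀ i : Fin p, 0 ≤ x i - ‖u‖) ∧ (∀ i : Fin p, 0 ≤ y i) ∧
      ∑ i : Fin p, (x i - ‖u‖) * y i = 0 := by
  subst hL hM
  obtain ⟨hsum, hy⟩ := hyv
  simp only [Set.mem_setOf_eq] at hxu hsum hy
  have hnu : (0:ℝ) < ‖u‖ := norm_pos_iff.mpr hu
  have hnv : (0:ℝ) < ‖v‖ := norm_pos_iff.mpr hv
  have hinner : ⟪x, y⟫ = ∑ i : Fin p, x i * y i := by
    rw [PiLp.inner_apply]; simp [mul_comm]
  have h1 : ‖u‖ * ∑ i : Fin p, y i ≤ ⟪x, y⟫ := by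
    rw [hinner, Finset.mul_sum]
    exact Finset.sum_le_sum fun i _ => mul_le_mul_of_nonneg_right (hxu i) (hy i)
  have h3 : ⟪u, -v⟫ ≤ ‖u‖ * ‖v‖ := by
    calc ⟪u, -v⟫ ≤ ‖u‖ * ‖-v‖ := real_inner_le_norm u (-v)
    _ = ‖u‖ * ‖v‖ := by rw [norm_neg]
  have hxy : ⟪x, y⟫ = ⟪u, -v⟫ := by rw [inner_neg_right]; linarith
  have h4 : ‖u‖ * ‖v‖ ≤ ‖u‖ * ∑ i : Fin p, y i :=
    mul_le_mul_of_nonneg_left hsum hnu.le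
  have heq1 : ⟪u, -v⟫ = ‖u‖ * ‖v‖ := le_antisymm h3 (by linarith)
  have heq2 : ∑ i : Fin p, y i = ‖v‖ := by
    have : ‖u‖ * ∑ i : Fin p, y i = ‖u‖ * ‖v‖ := by linarith
    exact mul_left_cancel₀ hnu.ne' this
  have hcs : ‖-v‖ • u = ‖u‖ • (-v) := by
    rw [← inner_eq_norm_mul_iff_real, heq1, norm_neg]
  refine ⟨‖v‖ / ‖u‖, div_pos hnv hnu, ?_, heq2, fun i => by linarith [hxu i], hy, ?_⟩
  · rw [norm_neg] at hcs
    have h5 : (‖v‖ / ‖u‖) • u = -v := by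
      rw [div_eq_inv_mul, mul_smul, hcs, inv_smul_smul₀ hnu.ne']
    rw [neg_smul, h5, neg_neg]
  · have hcompl : ⟪x, y⟫ = ‖u‖ * ∑ i : Fin p, y i := by linarith
    rw [hinner, Finset.mul_sum] at hcompl
    have : ∑ i : Fin p, (x i - ‖u‖) * y i =
        ∑ i : Fin p, x i * y i - ∑ i : Fin p, ‖u‖ * y i := by
      rw [← Finset.sum_sub_distrib]; congr 1; ext i; ring
    rw [this, hcompl, sub_self]
end

section
/- Assume there exists i₀ with max(z_{i₀},0) < ‖w‖ and ∑_i max(−z_i,0) < ‖w‖. Then there exists λ > 0 with ψ(λ) < 0, where ψ(λ) = −λ‖w‖ + ∑_i max(‖w‖ − (λ+1)z_i, 0). -/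
theorem psi_eventually_negative
    (p q : ℕ) (hp : 0 < p) (hq : 0 < q)
    (z : Fin p → ℝ) (w : EuclideanSpace ℝ (Fin q))
    (h1 : ∃ i : Fin p, max (z i) 0 < ‖w‖)
    (h2 : ∑ i : Fin p, max (-z i) 0 < ‖w‖) :
    ∃ lam : ℝ, 0 < lam ∧
      -lam * ‖w‖ + ∑ i : Fin p, max (‖w‖ - (lam + 1) * z i) 0 < 0 := by
  obtain ⟨i₀, hi₀⟩ := h1
  set W := ‖w‖ with hWdef
  set S := ∑ i : Fin p, max (-z i) 0 with hSdef
  have hW : 0 < W := lt_of_le_of_lt (le_max_right (z i₀) 0) hi₀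
  have hS0 : 0 ≤ S := Finset.sum_nonneg fun i _ => le_max_right _ _
  have hWS : 0 < W - S := by linarith
  set lam : ℝ := (p * W + S + 1) / (W - S) with hlamdef
  have hlam_pos : 0 < lam := by
    apply div_pos _ hWS
    have : (0:ℝ) < p := by exact_mod_cast hp
    nlinarith
  have hlam_eq : lam * (W - S) = p * W + S + 1 :=
    div_mul_cancel₀ _ (ne_of_gt hWS)
  refine ⟨lam, hlam_pos, ?_⟩
  have hc : (0:ℝ) ≤ lam + 1 := by linarith
  have hbound : ∀ i ∈ (Finset.univ : Finset (Fin p)),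
      max (W - (lam + 1) * z i) 0 ≤ W + (lam + 1) * max (-z i) 0 := by
    intro i _
    apply max_le
    · have := mul_le_mul_of_nonneg_left (le_max_left (-z i) 0) hc
      nlinarith
    · have : 0 ≤ (lam + 1) * max (-z i) 0 :=
        mul_nonneg hc (le_max_right _ _)
      linarith
  have hsum : ∑ i : Fin p, max (W - (lam + 1) * z i) 0
      ≤ ∑ i : Fin p, (W + (lam + 1) * max (-z i) 0) :=
    Finset.sum_le_sum hbound
  have hrhs : ∑ i : Fin p, (W + (lam + 1) * max (-z i) 0)
      = p * W + (lam + 1) * S := by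
    rw [Finset.sum_add_distrib, Finset.sum_const, ← Finset.mul_sum]
    simp [hSdef, mul_comm]
  rw [hrhs] at hsum
  nlinarith [hsum, hlam_eq]
end

section
/- Assume there exists i₀ with max(z_{i₀},0) < ‖w‖ and ∑_i max(−z_i,0) < ‖w‖. Then the function ψ(λ) = −λ‖w‖ + ∑_i max(‖w‖ − (λ+1)z_i, 0) has a unique zero λ* in (0,∞). -/
theorem psi_unique_positive_zero
    (p q : ℕ) (hp : 0 < p) (hq : 0 < q)
    (z : Fin p → ℝ) (w : EuclideanSpace ℝ (Fin q))
    (h1 : ∃ i : Fin p, max (z i) 0 < ‖w‖)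
    (h2 : ∑ i : Fin p, max (-z i) 0 < ‖w‖) :
    ∃! lam : ℝ, 0 < lam ∧
      -lam * ‖w‖ + ∑ i : Fin p, max (‖w‖ - (lam + 1) * z i) 0 = 0 := by
  obtain ⟨i0, hi0⟩ := h1
  set W := ‖w‖ with hW
  have hWpos : 0 < W := lt_of_le_of_lt (le_max_right (z i0) 0) hi0
  set S := ∑ i : Fin p, max (-z i) 0 with hS
  set ψ : ℝ → ℝ := fun lam => -lam * W + ∑ i : Fin p, max (W - (lam + 1) * z i) 0
    with hψ
  -- key inequality
  have key : ∀ a b : ℝ, a ≤ b → ψ b ≤ ψ a + (b - a) * (S - W) := by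
    intro a b hab
    have hterm : ∀ i : Fin p,
        max (W - (b + 1) * z i) 0 ≤ max (W - (a + 1) * z i) 0 + (b - a) * max (-z i) 0 := by
      intro i
      apply max_le
      · have h3 := le_max_left (W - (a + 1) * z i) 0
        have h4 : 0 ≤ (b - a) * (max (-z i) 0 - (-z i)) :=
          mul_nonneg (sub_nonneg.mpr hab) (sub_nonneg.mpr (le_max_left (-z i) 0))
        nlinarith
      · exact add_nonneg (le_max_right _ _)
          (mul_nonneg (sub_nonneg.mpr hab) (le_max_right _ _))
    have hsum := Finset.sum_le_sum
      (fun i (_ : i ∈ Finset.univ) => hterm i)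
    rw [Finset.sum_add_distrib, ← Finset.mul_sum] at hsum
    simp only [hψ]
    rw [← hS] at hsum
    nlinarith [hsum]
  have hanti : ∀ a b : ℝ, a < b → ψ b < ψ a := by
    intro a b hab
    have := key a b hab.le
    nlinarith [this, sub_pos.mpr hab, sub_pos.mpr h2]
  have hψ0 : 0 < ψ 0 := by
    simp only [hψ, neg_zero, zero_mul, zero_add, neg_mul, zero_mul, neg_zero, one_mul]
    have : (0:ℝ) < ∑ i : Fin p, max (W - (0 + 1) * z i) 0 := by
      apply Finset.sum_pos' (fun i _ => le_max_right _ _)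
      refine ⟨i0, Finset.mem_univ _, ?_⟩
      have : z i0 < W := lt_of_le_of_lt (le_max_left (z i0) 0) hi0
      have : 0 < W - (0 + 1) * z i0 := by linarith
      exact lt_of_lt_of_le this (le_max_left _ _)
    simp only [zero_add, one_mul] at this
    linarith
  set Λ : ℝ := ψ 0 / (W - S) with hΛ
  have hWS : 0 < W - S := sub_pos.mpr h2
  have hΛpos : 0 < Λ := div_pos hψ0 hWS
  have hψΛ : ψ Λ ≤ 0 := by
    have := key 0 Λ hΛpos.le
    have hmul : Λ * (W - S) = ψ 0 := div_mul_cancel₀ _ (ne_of_gt hWS)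
    nlinarith [this, hmul]
  -- continuity
  have hcont : Continuous ψ := by
    apply Continuous.add
    · fun_prop
    · apply continuous_finset_sum
      intro i _
      exact (continuous_const.sub (((continuous_id.add continuous_const)).mul
        continuous_const)).max continuous_const
  obtain ⟨c, hcmem, hc0⟩ : ∃ c ∈ Set.Icc (0:ℝ) Λ, ψ c = 0 := by
    have h := intermediate_value_Icc' hΛpos.le hcont.continuousOn
    have : (0:ℝ) ∈ Set.Icc (ψ Λ) (ψ 0) := ⟨hψΛ, hψ0.le⟩
    obtain ⟨c, hc, hc'⟩ := h this
    exact ⟨c, hc, hc'⟩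
  have hcpos : 0 < c := by
    rcases lt_or_eq_of_le hcmem.1 with h | h
    · exact h
    · exfalso; rw [← h] at hc0; linarith
  refine ⟨c, ⟨hcpos, hc0⟩, ?_⟩
  intro y ⟨hypos, hy0⟩
  have hy0' : ψ y = 0 := hy0
  rcases lt_trichotomy y c with h | h | h
  · exfalso; have := hanti y c h; rw [hy0', hc0] at this; linarith
  · exact h
  · exfalso; have := hanti c y h; rw [hy0', hc0] at this; linarith
end

section
/- If z^+ ≥ ‖w‖e, then the projection of (z,w) ∈ ℝ^p × ℝ^q onto the extended second order cone L equals (z^+, w). -/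
private lemma normsq {n : ℕ} (x : EuclideanSpace ℝ (Fin n)) :
    ‖x‖ ^ 2 = ∑ i, (x i) ^ 2 := by
  rw [EuclideanSpace.norm_eq, Real.sq_sqrt (by positivity)]
  simp [sq_abs]

private lemma pt_le {z t : ℝ} (ht : 0 ≤ t) : (z - max z 0) ^ 2 ≤ (z - t) ^ 2 := by
  rcases le_total z 0 with h | h
  · rw [max_eq_right h]; nlinarith
  · rw [max_eq_left h]; nlinarith

private lemma pt_eq {z t : ℝ} (ht : 0 ≤ t) (he : (z - t) ^ 2 = (z - max z 0) ^ 2) :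
    t = max z 0 := by
  rcases le_total z 0 with h | h
  · rw [max_eq_right h] at he ⊢; nlinarith
  · rw [max_eq_left h] at he ⊢; nlinarith

theorem proj_L_case1
    (p q : ℕ) (hp : 0 < p) (hq : 0 < q)
    (L : Set (EuclideanSpace ℝ (Fin p) × EuclideanSpace ℝ (Fin q)))
    (hL : L = {xu | ∀ i : Fin p, ‖xu.2‖ ≤ xu.1 i})
    (z : EuclideanSpace ℝ (Fin p)) (w : EuclideanSpace ℝ (Fin q))
    (h : ∀ i : Fin p, ‖w‖ ≤ max (z i) 0) :
    (((WithLp.equiv 2 _).symm (fun i => max (z i) 0), w) ∈ L ∧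
      (∀ a ∈ L, ‖z - (WithLp.equiv 2 _).symm (fun i => max (z i) 0)‖ ^ 2 + ‖w - w‖ ^ 2
          ≤ ‖z - a.1‖ ^ 2 + ‖w - a.2‖ ^ 2)) ∧
      ∀ b ∈ L, (∀ a ∈ L, ‖z - b.1‖ ^ 2 + ‖w - b.2‖ ^ 2 ≤ ‖z - a.1‖ ^ 2 + ‖w - a.2‖ ^ 2) →
        b = ((WithLp.equiv 2 _).symm (fun i => max (z i) 0), w) := by
  set P : EuclideanSpace ℝ (Fin p) := (WithLp.equiv 2 _).symm (fun i => max (z i) 0) with hP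
  have hPi : ∀ i, P i = max (z i) 0 := fun i => rfl
  have hPmem : (P, w) ∈ L := by
    rw [hL]; intro i; simpa [hPi] using h i
  have hdiffP : ∀ i, (z - P) i = z i - max (z i) 0 := by
    intro i; simp [hPi]
  have key : ∀ a : EuclideanSpace ℝ (Fin p) × EuclideanSpace ℝ (Fin q), a ∈ L →
      ∀ i, (z i - max (z i) 0) ^ 2 ≤ (z i - a.1 i) ^ 2 := by
    intro a ha i
    have h0 : 0 ≤ a.1 i := le_trans (norm_nonneg a.2) ((hL ▸ ha) i)
    exact pt_le h0
  have hmin : ∀ a ∈ L, ‖z - P‖ ^ 2 + ‖w - w‖ ^ 2 ≤ ‖z - a.1‖ ^ 2 + ‖w - a.2‖ ^ 2 := by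
    intro a ha
    have h1 : ‖z - P‖ ^ 2 ≤ ‖z - a.1‖ ^ 2 := by
      rw [normsq, normsq]
      apply Finset.sum_le_sum
      intro i _
      rw [hdiffP i]
      have : (z - a.1) i = z i - a.1 i := rfl
      rw [this]
      exact key a ha i
    have h2 : ‖w - w‖ ^ 2 = 0 := by simp
    have h3 : 0 ≤ ‖w - a.2‖ ^ 2 := by positivity
    linarith
  refine ⟨⟨hPmem, hmin⟩, ?_⟩
  intro b hb hbmin
  have hble := hbmin (P, w) hPmem
  have h2 : ‖w - w‖ ^ 2 = 0 := by simp
  have h1 : ‖z - P‖ ^ 2 ≤ ‖z - b.1‖ ^ 2 := by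
    rw [normsq, normsq]
    apply Finset.sum_le_sum
    intro i _
    rw [hdiffP i]
    have : (z - b.1) i = z i - b.1 i := rfl
    rw [this]
    exact key b hb i
  have hw2 : ‖w - b.2‖ ^ 2 ≤ 0 := by dsimp only at hble; linarith
  have hb2 : b.2 = w := by
    have : ‖w - b.2‖ = 0 := by nlinarith [norm_nonneg (w - b.2)]
    have := norm_sub_eq_zero_iff.mp this
    exact this.symm
  have heq : ‖z - b.1‖ ^ 2 = ‖z - P‖ ^ 2 := by
    rw [hb2] at hble; dsimp only at hble; linarith
  have hsum : ∑ i, (z i - b.1 i) ^ 2 = ∑ i, (z i - max (z i) 0) ^ 2 := by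
    have e1 : ‖z - b.1‖ ^ 2 = ∑ i, (z i - b.1 i) ^ 2 := by
      rw [normsq]; rfl
    have e2 : ‖z - P‖ ^ 2 = ∑ i, (z i - max (z i) 0) ^ 2 := by
      rw [normsq]; exact Finset.sum_congr rfl fun i _ => by rw [hdiffP i]
    rw [← e1, ← e2, heq]
  have hterm : ∀ i ∈ Finset.univ, (z i - b.1 i) ^ 2 = (z i - max (z i) 0) ^ 2 := by
    have := (Finset.sum_eq_sum_iff_of_le (fun i _ => key b hb i)).mp hsum.symm
    intro i hi
    exact (this i hi).symm
  have hb1 : b.1 = P := by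
    apply PiLp.ext
    intro i
    rw [hPi i]
    have h0 : 0 ≤ b.1 i := le_trans (norm_nonneg b.2) ((hL ▸ hb) i)
    exact pt_eq h0 (hterm i (Finset.mem_univ i))
  exact Prod.ext hb1 hb2
end

section
/- If z^+ ≥ ‖w‖e, then the projection of (−z,−w) onto M = {(y,v) : ⟨y,e⟩ ≥ ‖v‖, y ≥ 0} equals (z^−, 0). -/
/-!
With x = (-z, -w) and u = (z⁻, 0), we have x - u = (-z⁺, -w), and since z⁺ ⊥ z⁻ the variational
inequality ⟪x - u, a - u⟫ ≤ 0 at a = (y, v) ∈ M reads ⟨z⁺, y⟩ + ⟪w, v⟫ ≥ 0. It holds because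
⟨z⁺, y⟩ ≥ ‖w‖ ∑ yᵢ ≥ ‖w‖ ‖v‖ ≥ -⟪w, v⟫. The variational inequality gives
‖x - a‖² ≥ ‖x - u‖² + ‖a - u‖², which is minimality and uniqueness at once.
-/

open scoped RealInnerProductSpace

lemma neg_sub_negPart_mul_sub_negPart_le {t y c : ℝ} (hc : c ≤ max t 0) (hy : 0 ≤ y) :
    (-t - max (-t) 0) * (y - max (-t) 0) ≤ -(c * y) := by
  rcases le_total t 0 with ht | ht
  · rw [max_eq_left (neg_nonneg.mpr ht)]
    rw [max_eq_right ht] at hc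
    nlinarith
  · rw [max_eq_right (neg_nonpos.mpr ht)]
    rw [max_eq_left ht] at hc
    nlinarith

section

variable {E F : Type*} [NormedAddCommGroup E] [InnerProductSpace ℝ E]
  [NormedAddCommGroup F] [InnerProductSpace ℝ F]

lemma norm_sub_sq_add_norm_sub_sq_le_of_inner_add_inner_nonpos {x₁ u₁ a₁ : E} {x₂ u₂ a₂ : F}
    (h : ⟪x₁ - u₁, a₁ - u₁⟫ + ⟪x₂ - u₂, a₂ - u₂⟫ ≤ 0) :
    (‖x₁ - u₁‖ ^ 2 + ‖x₂ - u₂‖ ^ 2) + (‖a₁ - u₁‖ ^ 2 + ‖a₂ - u₂‖ ^ 2) ≤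
      ‖x₁ - a₁‖ ^ 2 + ‖x₂ - a₂‖ ^ 2 := by
  have h₁ := norm_sub_sq_real (x₁ - u₁) (a₁ - u₁)
  have h₂ := norm_sub_sq_real (x₂ - u₂) (a₂ - u₂)
  rw [sub_sub_sub_cancel_right] at h₁ h₂
  linarith

lemma inner_sub_negPart_add_inner_nonpos {ι : Type*} [Fintype ι]
    {z y u : EuclideanSpace ℝ ι} {w v : F} (hu : ∀ i, u i = max (-z i) 0)
    (hz : ∀ i, ‖w‖ ≤ max (z i) 0) (hy : ∀ i, 0 ≤ y i) (hv : ‖v‖ ≤ ∑ i, y i) :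
    ⟪-z - u, y - u⟫ + ⟪-w - 0, v - 0⟫ ≤ 0 := by
  have hcone : ⟪-z - u, y - u⟫ ≤ -(‖w‖ * ∑ i, y i) := by
    simp only [PiLp.inner_apply, PiLp.sub_apply, PiLp.neg_apply, hu, Finset.mul_sum,
      ← Finset.sum_neg_distrib]
    refine Finset.sum_le_sum fun i _ => ?_
    rw [real_inner_comm]
    exact neg_sub_negPart_mul_sub_negPart_le (hz i) (hy i)
  have hball : ⟪-w - 0, v - 0⟫ ≤ ‖w‖ * ‖v‖ := by
    simpa using real_inner_le_norm (-w) v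
  nlinarith [norm_nonneg w]

end

theorem proj_M_case1_general
    (p q : ℕ)
    (M : Set (EuclideanSpace ℝ (Fin p) × EuclideanSpace ℝ (Fin q)))
    (hM : M = {yv | ‖yv.2‖ ≤ ∑ i : Fin p, yv.1 i ∧ ∀ i : Fin p, 0 ≤ yv.1 i})
    (z : EuclideanSpace ℝ (Fin p)) (w : EuclideanSpace ℝ (Fin q))
    (h : ∀ i : Fin p, ‖w‖ ≤ max (z i) 0) :
    (((WithLp.equiv 2 _).symm (fun i => max (-z i) 0), (0 : EuclideanSpace ℝ (Fin q))) ∈ M ∧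
      (∀ a ∈ M, ‖(-z) - (WithLp.equiv 2 _).symm (fun i => max (-z i) 0)‖ ^ 2 + ‖(-w) - 0‖ ^ 2
          ≤ ‖(-z) - a.1‖ ^ 2 + ‖(-w) - a.2‖ ^ 2)) ∧
      ∀ b ∈ M, (∀ a ∈ M, ‖(-z) - b.1‖ ^ 2 + ‖(-w) - b.2‖ ^ 2 ≤ ‖(-z) - a.1‖ ^ 2 + ‖(-w) - a.2‖ ^ 2) →
        b = ((WithLp.equiv 2 _).symm (fun i => max (-z i) 0), (0 : EuclideanSpace ℝ (Fin q))) := by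
  set u : EuclideanSpace ℝ (Fin p) := (WithLp.equiv 2 _).symm (fun i => max (-z i) 0)
  have hu : ∀ i, u i = max (-z i) 0 := fun i => rfl
  have hu_mem : (u, (0 : EuclideanSpace ℝ (Fin q))) ∈ M := by
    rw [hM]
    exact ⟨by simpa [hu] using Finset.sum_nonneg fun i _ => le_max_right (-z i) 0,
      fun i => (hu i).symm ▸ le_max_right _ _⟩
  have growth : ∀ a ∈ M, (‖-z - u‖ ^ 2 + ‖-w - 0‖ ^ 2) + (‖a.1 - u‖ ^ 2 + ‖a.2 - 0‖ ^ 2) ≤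
      ‖-z - a.1‖ ^ 2 + ‖-w - a.2‖ ^ 2 := by
    rw [hM]
    rintro a ⟨hv, hy⟩
    exact norm_sub_sq_add_norm_sub_sq_le_of_inner_add_inner_nonpos
      (inner_sub_negPart_add_inner_nonpos hu h hy hv)
  refine ⟨⟨hu_mem, fun a ha => ?_⟩, fun b hb hmin => ?_⟩
  · linarith [growth a ha, sq_nonneg ‖a.1 - u‖, sq_nonneg ‖a.2 - 0‖]
  · have hdist : ‖b.1 - u‖ ^ 2 + ‖b.2 - 0‖ ^ 2 ≤ 0 := by linarith [growth b hb, hmin _ hu_mem]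
    have h₁ : ‖b.1 - u‖ = 0 := by nlinarith [sq_nonneg ‖b.1 - u‖, sq_nonneg ‖b.2 - 0‖]
    have h₂ : ‖b.2 - 0‖ = 0 := by nlinarith [sq_nonneg ‖b.1 - u‖, sq_nonneg ‖b.2 - 0‖]
    exact Prod.ext (sub_eq_zero.mp (norm_eq_zero.mp h₁)) (sub_eq_zero.mp (norm_eq_zero.mp h₂))

theorem proj_M_case1
    (p q : ℕ) (hp : 0 < p) (hq : 0 < q)
    (M : Set (EuclideanSpace ℝ (Fin p) × EuclideanSpace ℝ (Fin q)))
    (hM : M = {yv | ‖yv.2‖ ≤ ∑ i : Fin p, yv.1 i ∧ ∀ i : Fin p, 0 ≤ yv.1 i})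
    (z : EuclideanSpace ℝ (Fin p)) (w : EuclideanSpace ℝ (Fin q))
    (h : ∀ i : Fin p, ‖w‖ ≤ max (z i) 0) :
    (((WithLp.equiv 2 _).symm (fun i => max (-z i) 0), (0 : EuclideanSpace ℝ (Fin q))) ∈ M ∧
      (∀ a ∈ M, ‖(-z) - (WithLp.equiv 2 _).symm (fun i => max (-z i) 0)‖ ^ 2 + ‖(-w) - 0‖ ^ 2
          ≤ ‖(-z) - a.1‖ ^ 2 + ‖(-w) - a.2‖ ^ 2)) ∧
      ∀ b ∈ M, (∀ a ∈ M, ‖(-z) - b.1‖ ^ 2 + ‖(-w) - b.2‖ ^ 2 ≤ ‖(-z) - a.1‖ ^ 2 + ‖(-w) - a.2‖ ^ 2) →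
        b = ((WithLp.equiv 2 _).symm (fun i => max (-z i) 0), (0 : EuclideanSpace ℝ (Fin q))) :=
  proj_M_case1_general p q M hM z w h
end

section
/- If ⟨z^−, e⟩ ≥ ‖w‖, then the projection of (z,w) onto the extended second order cone L equals (z^+, 0). -/
/-!
Write `t = ‖u‖` for a point `(x, u)` of `L`, so that `x ≥ t e`. Coordinatewise,
`(zᵢ - xᵢ)² ≥ (zᵢ⁻)² + 2 t zᵢ⁻ + (xᵢ - zᵢ⁺)²`, and `‖w - u‖² ≥ (‖w‖ - t)²`. Adding up and using
`⟨z⁻, e⟩ ≥ ‖w‖` to absorb the cross term `-2 t ‖w‖` shows that the squared distance from `(z, w)`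
to `(x, u)` exceeds the one to `(z⁺, 0)` by at least `‖x - z⁺‖² + ‖u‖²`. This quadratic growth
gives both minimality and uniqueness of `(z⁺, 0)`.
-/

open Finset

noncomputable def euclideanPosPart {ι : Type*} (z : EuclideanSpace ℝ ι) : EuclideanSpace ℝ ι :=
  (WithLp.equiv 2 _).symm (fun i => max (z i) 0)

@[simp]
lemma euclideanPosPart_apply {ι : Type*} (z : EuclideanSpace ℝ ι) (i : ι) :
    euclideanPosPart z i = max (z i) 0 :=
  rfl

lemma sq_sub_posPart_add_le_sq_sub {z x t : ℝ} (hx : t ≤ x) :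
    (z - max z 0) ^ 2 + 2 * t * max (-z) 0 + (x - max z 0) ^ 2 ≤ (z - x) ^ 2 := by
  rcases le_total 0 z with hz | hz
  · rw [max_eq_left hz, max_eq_right (neg_nonpos.mpr hz)]
    nlinarith
  · rw [max_eq_right hz, max_eq_left (neg_nonneg.mpr hz)]
    nlinarith [mul_nonneg (neg_nonneg.mpr hz) (sub_nonneg.mpr hx)]

lemma sq_norm_sub_norm_le_sq_norm_sub {E : Type*} [SeminormedAddCommGroup E] (a b : E) :
    (‖a‖ - ‖b‖) ^ 2 ≤ ‖a - b‖ ^ 2 := by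
  rw [← sq_abs]
  exact pow_le_pow_left₀ (abs_nonneg _) (abs_norm_sub_norm_le a b) 2

lemma sq_norm_sub_euclideanPosPart_add_le {ι : Type*} [Fintype ι] (z x : EuclideanSpace ℝ ι)
    {t : ℝ} (hx : ∀ i, t ≤ x i) :
    ‖z - euclideanPosPart z‖ ^ 2 + 2 * t * ∑ i, max (-z i) 0 + ‖x - euclideanPosPart z‖ ^ 2
      ≤ ‖z - x‖ ^ 2 := by
  simp only [EuclideanSpace.real_norm_sq_eq, PiLp.sub_apply, euclideanPosPart_apply, mul_sum,
    ← sum_add_distrib]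
  exact sum_le_sum fun i _ => sq_sub_posPart_add_le_sq_sub (hx i)

lemma sq_dist_euclideanPosPart_add_le {ι E : Type*} [Fintype ι] [SeminormedAddCommGroup E]
    (z : EuclideanSpace ℝ ι) (w : E) (h : ‖w‖ ≤ ∑ i, max (-z i) 0)
    (a : EuclideanSpace ℝ ι × E) (ha : ∀ i, ‖a.2‖ ≤ a.1 i) :
    (‖z - euclideanPosPart z‖ ^ 2 + ‖w - 0‖ ^ 2) + (‖a.1 - euclideanPosPart z‖ ^ 2 + ‖a.2‖ ^ 2)
      ≤ ‖z - a.1‖ ^ 2 + ‖w - a.2‖ ^ 2 := by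
  have ht := norm_nonneg a.2
  have hz := sq_norm_sub_euclideanPosPart_add_le z a.1 ha
  have hw := sq_norm_sub_norm_le_sq_norm_sub w a.2
  have hcross := mul_le_mul_of_nonneg_left h (mul_nonneg zero_le_two ht)
  rw [sub_zero]
  nlinarith

theorem proj_L_case2_general
    (p q : ℕ)
    (L : Set (EuclideanSpace ℝ (Fin p) × EuclideanSpace ℝ (Fin q)))
    (hL : L = {xu | ∀ i : Fin p, ‖xu.2‖ ≤ xu.1 i})
    (z : EuclideanSpace ℝ (Fin p)) (w : EuclideanSpace ℝ (Fin q))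
    (h : ‖w‖ ≤ ∑ i : Fin p, max (-z i) 0) :
    (((WithLp.equiv 2 _).symm (fun i => max (z i) 0), (0 : EuclideanSpace ℝ (Fin q))) ∈ L ∧
      (∀ a ∈ L, ‖z - (WithLp.equiv 2 _).symm (fun i => max (z i) 0)‖ ^ 2 + ‖w - 0‖ ^ 2
          ≤ ‖z - a.1‖ ^ 2 + ‖w - a.2‖ ^ 2)) ∧
      ∀ b ∈ L, (∀ a ∈ L, ‖z - b.1‖ ^ 2 + ‖w - b.2‖ ^ 2 ≤ ‖z - a.1‖ ^ 2 + ‖w - a.2‖ ^ 2) →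
        b = ((WithLp.equiv 2 _).symm (fun i => max (z i) 0), (0 : EuclideanSpace ℝ (Fin q))) := by
  have hmem : (euclideanPosPart z, (0 : EuclideanSpace ℝ (Fin q))) ∈ L := hL ▸ fun i => by simp
  have growth (a) (ha : a ∈ L) := sq_dist_euclideanPosPart_add_le z w h a (by rwa [hL] at ha)
  refine ⟨⟨hmem, fun a ha => (le_add_of_nonneg_right (by positivity)).trans (growth a ha)⟩,
    fun b hb hbmin => ?_⟩
  have hb := (growth b hb).trans (hbmin _ hmem)
  have h₁ : ‖b.1 - euclideanPosPart z‖ = 0 := by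
    nlinarith [sq_nonneg ‖b.1 - euclideanPosPart z‖, sq_nonneg ‖b.2‖]
  have h₂ : ‖b.2‖ = 0 := by nlinarith [sq_nonneg ‖b.1 - euclideanPosPart z‖, sq_nonneg ‖b.2‖]
  exact Prod.ext (sub_eq_zero.mp (norm_eq_zero.mp h₁)) (norm_eq_zero.mp h₂)

theorem proj_L_case2
    (p q : ℕ) (hp : 0 < p) (hq : 0 < q)
    (L : Set (EuclideanSpace ℝ (Fin p) × EuclideanSpace ℝ (Fin q)))
    (hL : L = {xu | ∀ i : Fin p, ‖xu.2‖ ≤ xu.1 i})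
    (z : EuclideanSpace ℝ (Fin p)) (w : EuclideanSpace ℝ (Fin q))
    (h : ‖w‖ ≤ ∑ i : Fin p, max (-z i) 0) :
    (((WithLp.equiv 2 _).symm (fun i => max (z i) 0), (0 : EuclideanSpace ℝ (Fin q))) ∈ L ∧
      (∀ a ∈ L, ‖z - (WithLp.equiv 2 _).symm (fun i => max (z i) 0)‖ ^ 2 + ‖w - 0‖ ^ 2
          ≤ ‖z - a.1‖ ^ 2 + ‖w - a.2‖ ^ 2)) ∧
      ∀ b ∈ L, (∀ a ∈ L, ‖z - b.1‖ ^ 2 + ‖w - b.2‖ ^ 2 ≤ ‖z - a.1‖ ^ 2 + ‖w - a.2‖ ^ 2) →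
        b = ((WithLp.equiv 2 _).symm (fun i => max (z i) 0), (0 : EuclideanSpace ℝ (Fin q))) :=
  proj_L_case2_general p q L hL z w h
end

section
/- If ⟨z^−, e⟩ ≥ ‖w‖, then the projection of (−z,−w) onto M equals (z^−, −w). -/
/-! The point `(z⁻, -w)` is the projection of `(-z, -w)` onto the larger set
`{y ≥ 0} × ℝ^q`, because `z⁻` is the projection of `-z` onto the nonnegative orthant
(coordinatewise, `max t 0` is the nearest nonnegative number to `t`). The hypothesis
`⟨z⁻, e⟩ ≥ ‖w‖` says precisely that this point lies in the smaller set `M`, so it is also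
the projection onto `M`. -/

lemma sq_sub_max_zero_le {t y : ℝ} (hy : 0 ≤ y) : (t - max t 0) ^ 2 ≤ (t - y) ^ 2 := by
  rcases le_total t 0 with ht | ht
  · rw [max_eq_right ht]; nlinarith
  · rw [max_eq_left ht]; nlinarith

lemma eq_max_zero_of_sq_sub_le {t y : ℝ} (hy : 0 ≤ y) (h : (t - y) ^ 2 ≤ (t - max t 0) ^ 2) :
    y = max t 0 := by
  rcases le_total t 0 with ht | ht
  · rw [max_eq_right ht] at h ⊢; nlinarith
  · rw [max_eq_left ht] at h ⊢; nlinarith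

section Orthant

variable {ι : Type*} [Fintype ι] (x : EuclideanSpace ℝ ι) {y : EuclideanSpace ℝ ι}

lemma EuclideanSpace.norm_sub_max_zero_sq_le (hy : ∀ i, 0 ≤ y i) :
    ‖x - WithLp.toLp 2 (fun i => max (x i) 0)‖ ^ 2 ≤ ‖x - y‖ ^ 2 := by
  simp only [EuclideanSpace.real_norm_sq_eq, PiLp.sub_apply]
  exact Finset.sum_le_sum fun i _ => sq_sub_max_zero_le (hy i)

lemma EuclideanSpace.eq_max_zero_of_norm_sub_sq_le (hy : ∀ i, 0 ≤ y i)
    (h : ‖x - y‖ ^ 2 ≤ ‖x - WithLp.toLp 2 (fun i => max (x i) 0)‖ ^ 2) :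
    y = WithLp.toLp 2 (fun i => max (x i) 0) := by
  simp only [EuclideanSpace.real_norm_sq_eq, PiLp.sub_apply] at h
  have hcoord := (Finset.sum_eq_sum_iff_of_le fun i (_ : i ∈ Finset.univ) =>
    sq_sub_max_zero_le (t := x i) (hy i)).mp
    (le_antisymm (Finset.sum_le_sum fun i _ => sq_sub_max_zero_le (hy i)) h)
  ext i
  exact eq_max_zero_of_sq_sub_le (hy i) (hcoord i (Finset.mem_univ i)).ge

end Orthant

theorem proj_M_case2_general
    (p q : ℕ)
    (M : Set (EuclideanSpace ℝ (Fin p) × EuclideanSpace ℝ (Fin q)))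
    (hM : M = {yv | ‖yv.2‖ ≤ ∑ i : Fin p, yv.1 i ∧ ∀ i : Fin p, 0 ≤ yv.1 i})
    (z : EuclideanSpace ℝ (Fin p)) (w : EuclideanSpace ℝ (Fin q))
    (h : ‖w‖ ≤ ∑ i : Fin p, max (-z i) 0) :
    (((WithLp.equiv 2 _).symm (fun i => max (-z i) 0), -w) ∈ M ∧
      (∀ a ∈ M, ‖(-z) - (WithLp.equiv 2 _).symm (fun i => max (-z i) 0)‖ ^ 2 + ‖(-w) - (-w)‖ ^ 2
          ≤ ‖(-z) - a.1‖ ^ 2 + ‖(-w) - a.2‖ ^ 2)) ∧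
      ∀ b ∈ M, (∀ a ∈ M, ‖(-z) - b.1‖ ^ 2 + ‖(-w) - b.2‖ ^ 2 ≤ ‖(-z) - a.1‖ ^ 2 + ‖(-w) - a.2‖ ^ 2) →
        b = ((WithLp.equiv 2 _).symm (fun i => max (-z i) 0), -w) := by
  subst hM
  set u : EuclideanSpace ℝ (Fin p) := (WithLp.equiv 2 _).symm (fun i => max (-z i) 0)
  have hle : ∀ y : EuclideanSpace ℝ (Fin p), (∀ i, 0 ≤ y i) → ‖-z - u‖ ^ 2 ≤ ‖-z - y‖ ^ 2 :=
    fun y hy => EuclideanSpace.norm_sub_max_zero_sq_le (-z) hy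
  have hmem : (u, -w) ∈ {yv : EuclideanSpace ℝ (Fin p) × EuclideanSpace ℝ (Fin q) |
      ‖yv.2‖ ≤ ∑ i : Fin p, yv.1 i ∧ ∀ i : Fin p, 0 ≤ yv.1 i} :=
    ⟨(norm_neg w).trans_le h, fun i => le_max_right _ _⟩
  refine ⟨⟨hmem, fun a ha => ?_⟩, fun b hb hmin => ?_⟩
  · rw [sub_self, norm_zero, zero_pow two_ne_zero, add_zero]
    exact (hle a.1 ha.2).trans (le_add_of_nonneg_right (sq_nonneg _))
  · have hbu : ‖-z - b.1‖ ^ 2 + ‖-w - b.2‖ ^ 2 ≤ ‖-z - u‖ ^ 2 + ‖-w - -w‖ ^ 2 :=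
      hmin (u, -w) hmem
    rw [sub_self, norm_zero, zero_pow two_ne_zero, add_zero] at hbu
    have hb₁ : ‖-z - b.1‖ ^ 2 ≤ ‖-z - u‖ ^ 2 := by linarith [sq_nonneg ‖-w - b.2‖]
    have hb₂ : ‖-w - b.2‖ = 0 := by nlinarith [hle b.1 hb.2, norm_nonneg (-w - b.2)]
    exact Prod.ext (EuclideanSpace.eq_max_zero_of_norm_sub_sq_le (-z) hb.2 hb₁)
      (norm_sub_eq_zero_iff.mp hb₂).symm

theorem proj_M_case2
    (p q : ℕ) (hp : 0 < p) (hq : 0 < q)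
    (M : Set (EuclideanSpace ℝ (Fin p) × EuclideanSpace ℝ (Fin q)))
    (hM : M = {yv | ‖yv.2‖ ≤ ∑ i : Fin p, yv.1 i ∧ ∀ i : Fin p, 0 ≤ yv.1 i})
    (z : EuclideanSpace ℝ (Fin p)) (w : EuclideanSpace ℝ (Fin q))
    (h : ‖w‖ ≤ ∑ i : Fin p, max (-z i) 0) :
    (((WithLp.equiv 2 _).symm (fun i => max (-z i) 0), -w) ∈ M ∧
      (∀ a ∈ M, ‖(-z) - (WithLp.equiv 2 _).symm (fun i => max (-z i) 0)‖ ^ 2 + ‖(-w) - (-w)‖ ^ 2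
          ≤ ‖(-z) - a.1‖ ^ 2 + ‖(-w) - a.2‖ ^ 2)) ∧
      ∀ b ∈ M, (∀ a ∈ M, ‖(-z) - b.1‖ ^ 2 + ‖(-w) - b.2‖ ^ 2 ≤ ‖(-z) - a.1‖ ^ 2 + ‖(-w) - a.2‖ ^ 2) →
        b = ((WithLp.equiv 2 _).symm (fun i => max (-z i) 0), -w) :=
  proj_M_case2_general p q M hM z w h
end

section
/- Suppose there exists i₀ with max(z_{i₀},0) < ‖w‖, ∑_i max(−z_i,0) < ‖w‖, and λ > 0 satisfies λ‖w‖ = ∑_i max(‖w‖ − (λ+1)z_i, 0). Then the projection of (z,w) onto L is ([z − ‖w‖/(λ+1) e]^+ + ‖w‖/(λ+1) e, w/(λ+1)). -/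
/-!
With `μ = ‖w‖ / (λ + 1)`, `x̄ = max(z, μ e)` and `ū = w / (λ + 1)`, the candidate satisfies the
variational inequality `⟪(z, w) - (x̄, ū), (x, u) - (x̄, ū)⟫ ≤ 0` on `L`. Indeed
`z - x̄ = -c` with `c = [μ e - z]^+ ≥ 0` supported where `x̄ = μ`, and `w - ū = λ ū`, so for
`(x, u) ∈ L` the pairing is at most `-∑ cᵢ (xᵢ - μ) + λ μ (‖u‖ - μ)`. The equation for `λ`
says exactly `∑ cᵢ = λ μ`, turning this bound into `∑ cᵢ (‖u‖ - xᵢ) ≤ 0`. The variational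
inequality then gives minimality and uniqueness by expanding the squared distance.
-/

open RealInnerProductSpace

section VariationalInequality

variable {E F : Type*} [NormedAddCommGroup E] [InnerProductSpace ℝ E]
  [NormedAddCommGroup F] [InnerProductSpace ℝ F]

lemma add_norm_sub_sq_le_of_inner_add_inner_nonpos {z x a : E} {w u b : F}
    (h : ⟪z - x, a - x⟫ + ⟪w - u, b - u⟫ ≤ 0) :
    ‖z - x‖ ^ 2 + ‖w - u‖ ^ 2 + (‖a - x‖ ^ 2 + ‖b - u‖ ^ 2) ≤ ‖z - a‖ ^ 2 + ‖w - b‖ ^ 2 := by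
  have hz := norm_sub_sq_real (z - x) (a - x)
  have hw := norm_sub_sq_real (w - u) (b - u)
  rw [sub_sub_sub_cancel_right] at hz hw
  linarith

lemma isMinimizer_unique_of_inner_add_inner_nonpos {K : Set (E × F)} {z x : E} {w u : F}
    (hmem : (x, u) ∈ K) (hvi : ∀ a ∈ K, ⟪z - x, a.1 - x⟫ + ⟪w - u, a.2 - u⟫ ≤ 0) :
    ((x, u) ∈ K ∧ ∀ a ∈ K, ‖z - x‖ ^ 2 + ‖w - u‖ ^ 2 ≤ ‖z - a.1‖ ^ 2 + ‖w - a.2‖ ^ 2) ∧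
      ∀ b ∈ K, (∀ a ∈ K, ‖z - b.1‖ ^ 2 + ‖w - b.2‖ ^ 2 ≤ ‖z - a.1‖ ^ 2 + ‖w - a.2‖ ^ 2) →
        b = (x, u) := by
  refine ⟨⟨hmem, fun a ha => ?_⟩, fun b hb hbmin => ?_⟩
  · have hle := add_norm_sub_sq_le_of_inner_add_inner_nonpos (hvi a ha)
    have : 0 ≤ ‖a.1 - x‖ ^ 2 + ‖a.2 - u‖ ^ 2 := by positivity
    linarith
  · have hle := add_norm_sub_sq_le_of_inner_add_inner_nonpos (hvi b hb)
    have hmin := hbmin (x, u) hmem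
    obtain ⟨h1, h2⟩ := (add_eq_zero_iff_of_nonneg (by positivity) (by positivity)).1
      (le_antisymm (by linarith) (by positivity) : ‖b.1 - x‖ ^ 2 + ‖b.2 - u‖ ^ 2 = 0)
    rw [sq_eq_zero_iff, norm_sub_eq_zero_iff] at h1 h2
    exact Prod.ext h1 h2

end VariationalInequality

lemma inner_sub_smul_self_le {F : Type*} [NormedAddCommGroup F] [InnerProductSpace ℝ F]
    (w v : F) {t : ℝ} (ht : t ≤ 1) :
    ⟪w - t • w, v - t • w⟫ ≤ (1 - t) * ‖w‖ * (‖v‖ - t * ‖w‖) := by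
  have hwv := real_inner_le_norm w v
  rw [show w - t • w = (1 - t) • w by rw [sub_smul, one_smul], real_inner_smul_left,
    inner_sub_right, real_inner_smul_right, real_inner_self_eq_norm_sq]
  nlinarith [sub_nonneg.2 ht]

lemma inner_sub_max_sub_add_eq {ι : Type*} [Fintype ι] (z x : EuclideanSpace ℝ ι) (μ : ℝ) :
    ⟪z - WithLp.toLp 2 (fun i => max (z i - μ) 0 + μ),
        x - WithLp.toLp 2 (fun i => max (z i - μ) 0 + μ)⟫ =
      -∑ i, max (μ - z i) 0 * (x i - μ) := by
  simp only [PiLp.inner_apply, PiLp.sub_apply, ← Finset.sum_neg_distrib]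
  refine Finset.sum_congr rfl fun i _ => ?_
  rcases le_total (z i) μ with h | h
  · rw [max_eq_right (by linarith), max_eq_left (by linarith)]
    simp only [RCLike.inner_apply, conj_trivial]
    ring
  · rw [max_eq_left (by linarith), max_eq_right (by linarith)]
    simp

lemma sum_max_div_sub_eq_of_mul_eq {ι : Type*} [Fintype ι] {z : ι → ℝ} {r lam : ℝ}
    (hlam : 0 < lam + 1) (heq : lam * r = ∑ i, max (r - (lam + 1) * z i) 0) :
    ∑ i, max (r / (lam + 1) - z i) 0 = lam * (r / (lam + 1)) := by
  have hterm : ∀ i, max (r - (lam + 1) * z i) 0 = (lam + 1) * max (r / (lam + 1) - z i) 0 := by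
    intro i
    rw [mul_max_of_nonneg _ _ hlam.le, mul_zero, mul_sub, mul_div_cancel₀ _ hlam.ne']
  simp only [hterm, ← Finset.mul_sum] at heq
  rw [← mul_div_assoc, eq_div_iff hlam.ne']
  linarith

theorem proj_L_case3_general
    (p q : ℕ)
    (L : Set (EuclideanSpace ℝ (Fin p) × EuclideanSpace ℝ (Fin q)))
    (hL : L = {xu | ∀ i : Fin p, ‖xu.2‖ ≤ xu.1 i})
    (z : EuclideanSpace ℝ (Fin p)) (w : EuclideanSpace ℝ (Fin q))
    (lam : ℝ) (hlam : 0 < lam)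
    (heq : lam * ‖w‖ = ∑ i : Fin p, max (‖w‖ - (lam + 1) * z i) 0) :
    (((WithLp.equiv 2 _).symm (fun i => max (z i - ‖w‖ / (lam + 1)) 0 + ‖w‖ / (lam + 1)),
        (1 / (lam + 1)) • w) ∈ L ∧
      (∀ a ∈ L,
        ‖z - (WithLp.equiv 2 _).symm (fun i => max (z i - ‖w‖ / (lam + 1)) 0 + ‖w‖ / (lam + 1))‖ ^ 2
            + ‖w - (1 / (lam + 1)) • w‖ ^ 2
          ≤ ‖z - a.1‖ ^ 2 + ‖w - a.2‖ ^ 2)) ∧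
      ∀ b ∈ L, (∀ a ∈ L, ‖z - b.1‖ ^ 2 + ‖w - b.2‖ ^ 2 ≤ ‖z - a.1‖ ^ 2 + ‖w - a.2‖ ^ 2) →
        b = ((WithLp.equiv 2 _).symm (fun i => max (z i - ‖w‖ / (lam + 1)) 0 + ‖w‖ / (lam + 1)),
          (1 / (lam + 1)) • w) := by
  subst hL
  set μ := ‖w‖ / (lam + 1) with hμ
  have hlam1 : 0 < lam + 1 := by linarith
  have hnorm : ‖(1 / (lam + 1)) • w‖ = μ := by
    rw [norm_smul, Real.norm_of_nonneg (by positivity), one_div_mul_eq_div]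
  have hsum : ∑ i, max (μ - z i) 0 = lam * μ := sum_max_div_sub_eq_of_mul_eq hlam1 heq
  rw [WithLp.equiv_symm_apply]
  refine isMinimizer_unique_of_inner_add_inner_nonpos
    (fun i => hnorm ▸ le_add_of_nonneg_left (le_max_right _ _)) fun a ha => ?_
  have hu : ⟪w - (1 / (lam + 1)) • w, a.2 - (1 / (lam + 1)) • w⟫ ≤ lam * μ * (‖a.2‖ - μ) := by
    convert inner_sub_smul_self_le w a.2 (t := 1 / (lam + 1))
      ((div_le_one hlam1).2 (by linarith)) using 2
    · rw [hμ]
      field_simp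
      ring
    · rw [one_div_mul_eq_div]
  have hcone : ∑ i, max (μ - z i) 0 * (‖a.2‖ - μ) ≤ ∑ i, max (μ - z i) 0 * (a.1 i - μ) :=
    Finset.sum_le_sum fun i _ => mul_le_mul_of_nonneg_left (by linarith [ha i]) (le_max_right _ _)
  rw [← Finset.sum_mul, hsum] at hcone
  rw [inner_sub_max_sub_add_eq]
  linarith

theorem proj_L_case3
    (p q : ℕ) (hp : 0 < p) (hq : 0 < q)
    (L : Set (EuclideanSpace ℝ (Fin p) × EuclideanSpace ℝ (Fin q)))
    (hL : L = {xu | ∀ i : Fin p, ‖xu.2‖ ≤ xu.1 i})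
    (z : EuclideanSpace ℝ (Fin p)) (w : EuclideanSpace ℝ (Fin q)) (hw : w ≠ 0)
    (h1 : ∃ i : Fin p, max (z i) 0 < ‖w‖)
    (h2 : ∑ i : Fin p, max (-z i) 0 < ‖w‖)
    (lam : ℝ) (hlam : 0 < lam)
    (heq : lam * ‖w‖ = ∑ i : Fin p, max (‖w‖ - (lam + 1) * z i) 0) :
    (((WithLp.equiv 2 _).symm (fun i => max (z i - ‖w‖ / (lam + 1)) 0 + ‖w‖ / (lam + 1)),
        (1 / (lam + 1)) • w) ∈ L ∧
      (∀ a ∈ L,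
        ‖z - (WithLp.equiv 2 _).symm (fun i => max (z i - ‖w‖ / (lam + 1)) 0 + ‖w‖ / (lam + 1))‖ ^ 2
            + ‖w - (1 / (lam + 1)) • w‖ ^ 2
          ≤ ‖z - a.1‖ ^ 2 + ‖w - a.2‖ ^ 2)) ∧
      ∀ b ∈ L, (∀ a ∈ L, ‖z - b.1‖ ^ 2 + ‖w - b.2‖ ^ 2 ≤ ‖z - a.1‖ ^ 2 + ‖w - a.2‖ ^ 2) →
        b = ((WithLp.equiv 2 _).symm (fun i => max (z i - ‖w‖ / (lam + 1)) 0 + ‖w‖ / (lam + 1)),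
          (1 / (lam + 1)) • w) :=
  proj_L_case3_general p q L hL z w lam hlam heq
end

section
/- Suppose there exists i₀ with max(z_{i₀},0) < ‖w‖, ∑_i max(−z_i,0) < ‖w‖, and λ > 0 satisfies λ‖w‖ = ∑_i max(‖w‖ − (λ+1)z_i, 0). Then the projection of (−z,−w) onto M is ([z − ‖w‖/(λ+1) e]^−, −λw/(λ+1)). -/
/-!
The candidate `b` is certified by the variational inequality `⟪x - b, a - b⟫ ≤ 0` on `M`, which
gives `‖x - b‖² + ‖a - b‖² ≤ ‖x - a‖²` and hence both minimality and uniqueness. With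
`c = ‖w‖ / (λ + 1)`, the residual `(-z, -w) - b` has first block `≤ -c` coordinatewise and second
block of norm `c`, so it pairs nonpositively with every point of `M`; it pairs to zero with `b`
because the equation for `λ` says exactly that `∑ b₁ = ‖b₂‖`.
-/

open RealInnerProductSpace

section Projection

variable {E F : Type*} [NormedAddCommGroup E] [InnerProductSpace ℝ E]
  [NormedAddCommGroup F] [InnerProductSpace ℝ F]

lemma norm_sub_sq_eq_norm_sub_sq_sub_inner_add (x b a : E) :
    ‖x - a‖ ^ 2 = ‖x - b‖ ^ 2 - 2 * ⟪x - b, a - b⟫ + ‖a - b‖ ^ 2 := by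
  rw [show x - a = (x - b) - (a - b) by abel, norm_sub_sq_real]

theorem isMinimizer_unique_of_inner_nonpos {K : Set (E × F)} {x : E} {y : F} {b : E × F}
    (hb : b ∈ K) (hvar : ∀ a ∈ K, ⟪x - b.1, a.1 - b.1⟫ + ⟪y - b.2, a.2 - b.2⟫ ≤ 0) :
    (b ∈ K ∧ ∀ a ∈ K, ‖x - b.1‖ ^ 2 + ‖y - b.2‖ ^ 2 ≤ ‖x - a.1‖ ^ 2 + ‖y - a.2‖ ^ 2) ∧
      ∀ b' ∈ K, (∀ a ∈ K, ‖x - b'.1‖ ^ 2 + ‖y - b'.2‖ ^ 2 ≤ ‖x - a.1‖ ^ 2 + ‖y - a.2‖ ^ 2) →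
        b' = b := by
  have key : ∀ a ∈ K, ‖x - b.1‖ ^ 2 + ‖y - b.2‖ ^ 2 + (‖a.1 - b.1‖ ^ 2 + ‖a.2 - b.2‖ ^ 2)
      ≤ ‖x - a.1‖ ^ 2 + ‖y - a.2‖ ^ 2 := fun a ha => by
    rw [norm_sub_sq_eq_norm_sub_sq_sub_inner_add x b.1 a.1,
      norm_sub_sq_eq_norm_sub_sq_sub_inner_add y b.2 a.2]
    linarith [hvar a ha]
  refine ⟨⟨hb, fun a ha => ?_⟩, fun b' hb' hmin => ?_⟩
  · linarith [key a ha, sq_nonneg ‖a.1 - b.1‖, sq_nonneg ‖a.2 - b.2‖]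
  · have h₁ := sq_nonneg ‖b'.1 - b.1‖
    have h₂ := sq_nonneg ‖b'.2 - b.2‖
    have hle := (key b' hb').trans (hmin b hb)
    have e₁ : ‖b'.1 - b.1‖ ^ 2 = 0 := by linarith
    have e₂ : ‖b'.2 - b.2‖ ^ 2 = 0 := by linarith
    simp only [sq_eq_zero_iff, norm_eq_zero, sub_eq_zero] at e₁ e₂
    exact Prod.ext e₁ e₂

end Projection

section SumNormCone

variable {ι F : Type*} [NormedAddCommGroup F] [InnerProductSpace ℝ F]

variable (ι F) in
def sumNormCone [Fintype ι] : Set (EuclideanSpace ℝ ι × F) :=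
  {yv | ‖yv.2‖ ≤ ∑ i, yv.1 i ∧ ∀ i, 0 ≤ yv.1 i}

lemma inner_add_inner_nonpos_of_mem_sumNormCone [Fintype ι] {c : ℝ} (hc : 0 ≤ c) {d : EuclideanSpace ℝ ι}
    {e : F} (hd : ∀ i, d i ≤ -c) (he : ‖e‖ ≤ c) {a : EuclideanSpace ℝ ι × F}
    (ha : a ∈ sumNormCone ι F) : ⟪d, a.1⟫ + ⟪e, a.2⟫ ≤ 0 := by
  obtain ⟨hnorm, hnonneg⟩ := ha
  have h₁ : ⟪d, a.1⟫ ≤ -c * ∑ i, a.1 i := by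
    simp only [PiLp.inner_apply, Real.inner_apply, Finset.mul_sum]
    exact Finset.sum_le_sum fun i _ => mul_le_mul_of_nonneg_right (hd i) (hnonneg i)
  have h₂ : ⟪e, a.2⟫ ≤ c * ∑ i, a.1 i :=
    calc ⟪e, a.2⟫ ≤ ‖e‖ * ‖a.2‖ := real_inner_le_norm _ _
      _ ≤ c * ∑ i, a.1 i := mul_le_mul he hnorm (norm_nonneg _) hc
  linarith

variable {z b : EuclideanSpace ℝ ι} {c : ℝ}

lemma neg_sub_apply_le_of_apply_eq_negPart (hb : ∀ i, b i = max (-(z i - c)) 0) (i : ι) :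
    (-z - b) i ≤ -c := by
  simp only [PiLp.sub_apply, PiLp.neg_apply, hb]
  linarith [le_max_left (-(z i - c)) 0]

lemma inner_neg_sub_self_of_apply_eq_negPart [Fintype ι] (hb : ∀ i, b i = max (-(z i - c)) 0) :
    ⟪-z - b, b⟫ = -c * ∑ i, b i := by
  simp only [PiLp.inner_apply, Real.inner_apply, Finset.mul_sum, PiLp.sub_apply,
    PiLp.neg_apply, hb]
  refine Finset.sum_congr rfl fun i _ => ?_
  rcases le_total (z i) c with h | h
  · rw [max_eq_left (by linarith)]; ring
  · rw [max_eq_right (by linarith)]; ring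

end SumNormCone

theorem proj_M_case3_general
    (p q : ℕ)
    (M : Set (EuclideanSpace ℝ (Fin p) × EuclideanSpace ℝ (Fin q)))
    (hM : M = {yv | ‖yv.2‖ ≤ ∑ i : Fin p, yv.1 i ∧ ∀ i : Fin p, 0 ≤ yv.1 i})
    (z : EuclideanSpace ℝ (Fin p)) (w : EuclideanSpace ℝ (Fin q))
    (lam : ℝ) (hlam : 0 < lam)
    (heq : lam * ‖w‖ = ∑ i : Fin p, max (‖w‖ - (lam + 1) * z i) 0) :
    (((WithLp.equiv 2 _).symm (fun i => max (-(z i - ‖w‖ / (lam + 1))) 0),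
        (-(lam / (lam + 1))) • w) ∈ M ∧
      (∀ a ∈ M,
        ‖(-z) - (WithLp.equiv 2 _).symm (fun i => max (-(z i - ‖w‖ / (lam + 1))) 0)‖ ^ 2
            + ‖(-w) - (-(lam / (lam + 1))) • w‖ ^ 2
          ≤ ‖(-z) - a.1‖ ^ 2 + ‖(-w) - a.2‖ ^ 2)) ∧
      ∀ b ∈ M, (∀ a ∈ M, ‖(-z) - b.1‖ ^ 2 + ‖(-w) - b.2‖ ^ 2 ≤ ‖(-z) - a.1‖ ^ 2 + ‖(-w) - a.2‖ ^ 2) →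
        b = ((WithLp.equiv 2 _).symm (fun i => max (-(z i - ‖w‖ / (lam + 1))) 0),
          (-(lam / (lam + 1))) • w) := by
  subst hM
  have hl : 0 < lam + 1 := by linarith
  set c := ‖w‖ / (lam + 1) with hc
  set b₁ : EuclideanSpace ℝ (Fin p) := (WithLp.equiv 2 _).symm fun i => max (-(z i - c)) 0
  have hb₁ : ∀ i, b₁ i = max (-(z i - c)) 0 := fun _ => rfl
  have hsum : ∑ i, b₁ i = lam * c := by
    refine mul_left_cancel₀ hl.ne' ?_
    rw [Finset.mul_sum, show (lam + 1) * (lam * c) = lam * ‖w‖ by rw [hc]; field_simp, heq]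
    refine Finset.sum_congr rfl fun i _ => ?_
    rw [hb₁, mul_max_of_nonneg _ _ hl.le, mul_zero, hc]
    field_simp
    ring_nf
  have hb₂ : ‖(-(lam / (lam + 1))) • w‖ = lam * c := by
    rw [norm_smul, norm_neg, Real.norm_of_nonneg (by positivity), hc]; ring
  have hres₂ : -w - (-(lam / (lam + 1))) • w = (-(1 / (lam + 1))) • w := by
    match_scalars; field_simp; ring
  have hres₂_norm : ‖-w - (-(lam / (lam + 1))) • w‖ = c := by
    rw [hres₂, norm_smul, norm_neg, Real.norm_of_nonneg (by positivity), hc]; ring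
  have hcompl : ⟪-z - b₁, b₁⟫ + ⟪-w - (-(lam / (lam + 1))) • w, (-(lam / (lam + 1))) • w⟫ = 0 := by
    rw [inner_neg_sub_self_of_apply_eq_negPart hb₁, hsum, hres₂, real_inner_smul_left,
      real_inner_smul_right, real_inner_self_eq_norm_sq, hc]
    field_simp
    ring
  refine isMinimizer_unique_of_inner_nonpos (K := sumNormCone (Fin p) _)
    ⟨by rw [hb₂, hsum], fun i => le_max_right _ _⟩ fun a ha => ?_
  rw [inner_sub_right, inner_sub_right]
  linarith [inner_add_inner_nonpos_of_mem_sumNormCone (by positivity)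
    (neg_sub_apply_le_of_apply_eq_negPart hb₁) hres₂_norm.le ha]

theorem proj_M_case3
    (p q : ℕ) (hp : 0 < p) (hq : 0 < q)
    (M : Set (EuclideanSpace ℝ (Fin p) × EuclideanSpace ℝ (Fin q)))
    (hM : M = {yv | ‖yv.2‖ ≤ ∑ i : Fin p, yv.1 i ∧ ∀ i : Fin p, 0 ≤ yv.1 i})
    (z : EuclideanSpace ℝ (Fin p)) (w : EuclideanSpace ℝ (Fin q)) (hw : w ≠ 0)
    (h1 : ∃ i : Fin p, max (z i) 0 < ‖w‖)
    (h2 : ∑ i : Fin p, max (-z i) 0 < ‖w‖)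
    (lam : ℝ) (hlam : 0 < lam)
    (heq : lam * ‖w‖ = ∑ i : Fin p, max (‖w‖ - (lam + 1) * z i) 0) :
    (((WithLp.equiv 2 _).symm (fun i => max (-(z i - ‖w‖ / (lam + 1))) 0),
        (-(lam / (lam + 1))) • w) ∈ M ∧
      (∀ a ∈ M,
        ‖(-z) - (WithLp.equiv 2 _).symm (fun i => max (-(z i - ‖w‖ / (lam + 1))) 0)‖ ^ 2
            + ‖(-w) - (-(lam / (lam + 1))) • w‖ ^ 2
          ≤ ‖(-z) - a.1‖ ^ 2 + ‖(-w) - a.2‖ ^ 2)) ∧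
      ∀ b ∈ M, (∀ a ∈ M, ‖(-z) - b.1‖ ^ 2 + ‖(-w) - b.2‖ ^ 2 ≤ ‖(-z) - a.1‖ ^ 2 + ‖(-w) - a.2‖ ^ 2) →
        b = ((WithLp.equiv 2 _).symm (fun i => max (-(z i - ‖w‖ / (lam + 1))) 0),
          (-(lam / (lam + 1))) • w) :=
  proj_M_case3_general p q M hM z w lam hlam heq
end

section
/- If ∑_{i=1}^p |z_i| < ‖w‖, then the map φ(λ) = (1/‖w‖) ∑_i max(‖w‖ − (λ+1)z_i, 0) is a contraction on [0,∞) with Lipschitz constant (∑_i |z_i|)/‖w‖ < 1; consequently the Picard iteration λ_{k+1} = φ(λ_k), starting from any λ₀ > 0, converges to the unique solution of λ‖w‖ = ∑_i max(‖w‖ − (λ+1)z_i, 0). -/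
/-!
Since `t ↦ max t 0` is 1-Lipschitz, the `i`-th summand of `φ` is `|z i|`-Lipschitz in `λ` on all
of `ℝ`, so `φ` is a contraction of `ℝ` with constant `∑ |z i| / ‖w‖ < 1`. Banach's fixed point
theorem then gives a unique fixed point attracting every orbit, and after multiplying by `‖w‖`
the fixed points of `φ` are exactly the solutions of `λ‖w‖ = ∑ max (‖w‖ - (λ + 1) z i) 0`.
-/

open scoped NNReal

theorem LipschitzWith.finset_sum {α ι E : Type*} [PseudoEMetricSpace α] [SeminormedAddCommGroup E]
    {s : Finset ι} {f : ι → α → E} {K : ι → ℝ≥0} (hf : ∀ i ∈ s, LipschitzWith (K i) (f i)) :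
    LipschitzWith (∑ i ∈ s, K i) fun x => ∑ i ∈ s, f i x := by
  classical
  induction s using Finset.induction_on with
  | empty => simpa using LipschitzWith.const (0 : E)
  | insert j s hj ih =>
    simp only [Finset.sum_insert hj]
    exact (hf j (s.mem_insert_self j)).add (ih fun i hi => hf i (Finset.mem_insert_of_mem hi))

theorem lipschitzWith_max_sub_add_one_mul_zero (c a : ℝ) :
    LipschitzWith ‖a‖₊ fun lam : ℝ => max (c - (lam + 1) * a) 0 := by
  refine LipschitzWith.of_dist_le_mul fun lam mu => ?_
  simp only [Real.dist_eq, coe_nnnorm, Real.norm_eq_abs]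
  calc |max (c - (lam + 1) * a) 0 - max (c - (mu + 1) * a) 0|
      ≤ |(c - (lam + 1) * a) - (c - (mu + 1) * a)| := abs_max_sub_max_le_abs _ _ _
    _ = |a * (mu - lam)| := by ring_nf
    _ = |a| * |lam - mu| := by rw [abs_mul, abs_sub_comm]

theorem lipschitzWith_mul_sum_max_sub_add_one_mul_zero {ι : Type*} [Fintype ι]
    (b c : ℝ) (z : ι → ℝ) :
    LipschitzWith (‖b‖₊ * ∑ i, ‖z i‖₊) fun lam : ℝ => b * ∑ i, max (c - (lam + 1) * z i) 0 :=
  (lipschitzWith_smul b).comp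
    (LipschitzWith.finset_sum fun i _ => lipschitzWith_max_sub_add_one_mul_zero c (z i))

theorem picard_iteration_converges_general
    (p q : ℕ)
    (z : Fin p → ℝ) (w : EuclideanSpace ℝ (Fin q))
    (hz : ∑ i : Fin p, |z i| < ‖w‖)
    (φ : ℝ → ℝ)
    (hφ : φ = fun lam : ℝ => (1 / ‖w‖) * ∑ i : Fin p, max (‖w‖ - (lam + 1) * z i) 0) :
    (∀ lam ∈ Set.Ici (0 : ℝ), ∀ mu ∈ Set.Ici (0 : ℝ),
        |φ lam - φ mu| ≤ ((∑ i : Fin p, |z i|) / ‖w‖) * |lam - mu|) ∧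
      (∑ i : Fin p, |z i|) / ‖w‖ < 1 ∧
      ∃! lamStar : ℝ,
        (lamStar * ‖w‖ = ∑ i : Fin p, max (‖w‖ - (lamStar + 1) * z i) 0 ∧
          ∀ lam₀ : ℝ, 0 < lam₀ →
            Filter.Tendsto (fun k : ℕ => φ^[k] lam₀) Filter.atTop (nhds lamStar)) := by
  have hw : 0 < ‖w‖ := (Finset.sum_nonneg fun i _ => abs_nonneg (z i)).trans_lt hz
  have hK : (∑ i, |z i|) / ‖w‖ < 1 := (div_lt_one hw).mpr hz
  set K : ℝ≥0 := ‖1 / ‖w‖‖₊ * ∑ i, ‖z i‖₊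
  have hK_coe : (K : ℝ) = (∑ i, |z i|) / ‖w‖ := by
    simp [K, div_eq_inv_mul]
  have hlip : LipschitzWith K φ := hφ ▸ lipschitzWith_mul_sum_max_sub_add_one_mul_zero _ _ z
  have hc : ContractingWith K φ := ⟨by rw [← NNReal.coe_lt_coe, hK_coe]; exact hK, hlip⟩
  have hfix : ∀ y, y * ‖w‖ = ∑ i, max (‖w‖ - (y + 1) * z i) 0 ↔ Function.IsFixedPt φ y := by
    intro y
    rw [hφ, Function.IsFixedPt, one_div_mul_eq_div, div_eq_iff hw.ne', eq_comm]
  refine ⟨fun lam _ mu _ => ?_, hK, hc.fixedPoint φ,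
    ⟨(hfix _).2 hc.fixedPoint_isFixedPt, fun lam₀ _ => hc.tendsto_iterate_fixedPoint lam₀⟩,
    fun y hy => hc.fixedPoint_unique ((hfix y).1 hy.1)⟩
  simpa only [Real.dist_eq, hK_coe] using hlip.dist_le_mul lam mu

theorem picard_iteration_converges
    (p q : ℕ) (hp : 0 < p) (hq : 0 < q)
    (z : Fin p → ℝ) (w : EuclideanSpace ℝ (Fin q)) (hw : w ≠ 0)
    (hz : ∑ i : Fin p, |z i| < ‖w‖)
    (φ : ℝ → ℝ)
    (hφ : φ = fun lam : ℝ => (1 / ‖w‖) * ∑ i : Fin p, max (‖w‖ - (lam + 1) * z i) 0) :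
    (∀ lam ∈ Set.Ici (0 : ℝ), ∀ mu ∈ Set.Ici (0 : ℝ),
        |φ lam - φ mu| ≤ ((∑ i : Fin p, |z i|) / ‖w‖) * |lam - mu|) ∧
      (∑ i : Fin p, |z i|) / ‖w‖ < 1 ∧
      ∃! lamStar : ℝ,
        (lamStar * ‖w‖ = ∑ i : Fin p, max (‖w‖ - (lamStar + 1) * z i) 0 ∧
          ∀ lam₀ : ℝ, 0 < lam₀ →
            Filter.Tendsto (fun k : ℕ => φ^[k] lam₀) Filter.atTop (nhds lamStar)) :=
  picard_iteration_converges_general p q z w hz φ hφ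
end
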